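/- arXiv:2010.00217 — 2 statements merged into one kernel-verified Lean document; each statement's English description precedes it below -/
import Mathlib

section
/- In the collaborative decoding protocol, if every symbol of the coded Merkle tree is covered by at least one honest participant and every selective broadcast reaches the entire network, then collaborative peeling decoding decodes exactly the same set of symbols as centralized peeling decoding; in particular, if no stopping set of the LDPC code is hidden, collaborative decoding recovers all symbols. -/
/-- Centralized peeling decoding: a symbol is decoded if it is initially
known, or if some parity check containing it has all of its other symbols
decoded. -/
inductive CentralDecoded {S C : Type*} (adj : C → Finset S) (K0 : Set S) : S → Prop
  | base {s : S} : s ∈ K0 → CentralDecoded adj K0 s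
  | peel {s : S} (c : C) : s ∈ adj c →
      (∀ t ∈ adj c, t ≠ s → CentralDecoded adj K0 t) → CentralDecoded adj K0 s

/-- Collaborative peeling decoding: additionally, a symbol can only be peeled
by an honest participant in charge of it (the other symbols of the parity
having been broadcast). -/
inductive CollabDecoded {S C P : Type*} (adj : C → Finset S) (K0 : Set S)
    (assign : S → Set P) (honest : Set P) : S → Prop
  | base {s : S} : s ∈ K0 → CollabDecoded adj K0 assign honest s
  | peel {s : S} (c : C) : (∃ p ∈ assign s, p ∈ honest) → s ∈ adj c →
      (∀ t ∈ adj c, t ≠ s → CollabDecoded adj K0 assign honest t) →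
      CollabDecoded adj K0 assign honest s

/-- A stopping set: a nonempty set of symbols such that every parity check
touching it touches it in at least two symbols. -/
def IsStoppingSet {S C : Type*} [DecidableEq S] (adj : C → Finset S)
    (T : Finset S) : Prop :=
  T.Nonempty ∧ ∀ c : C, (adj c ∩ T).Nonempty → 2 ≤ (adj c ∩ T).card

/-!
Collaborative peeling is centralized peeling with the extra side condition that someone honest
is in charge of the peeled symbol; honest coverage makes that condition always true, so the two
inductive closures coincide. If some symbol stays undecoded, the undecoded symbols form a
stopping set disjoint from the initially known ones: a parity check meeting it in exactly one
symbol would peel that symbol.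
-/

section Peeling

variable {S C P : Type*} {adj : C → Finset S} {K0 : Set S} {assign : S → Set P}
  {honest : Set P} {s : S}

theorem CollabDecoded.centralDecoded (h : CollabDecoded adj K0 assign honest s) :
    CentralDecoded adj K0 s := by
  induction h with
  | base hK => exact .base hK
  | peel c _ hs _ ih => exact .peel c hs ih

theorem CentralDecoded.collabDecoded (hcover : ∀ s : S, ∃ p ∈ assign s, p ∈ honest)
    (h : CentralDecoded adj K0 s) : CollabDecoded adj K0 assign honest s := by
  induction h with
  | base hK => exact .base hK
  | peel c hs _ ih => exact .peel c (hcover _) hs ih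

theorem exists_stoppingSet_of_not_centralDecoded [Fintype S] [DecidableEq S]
    (hs : ¬ CentralDecoded adj K0 s) :
    ∃ T : Finset S, (∀ t ∈ T, t ∉ K0) ∧ IsStoppingSet adj T := by
  classical
  set U := Finset.univ.filter fun t => ¬ CentralDecoded adj K0 t
  have mem_U {t : S} : t ∈ U ↔ ¬ CentralDecoded adj K0 t := by simp [U]
  refine ⟨U, fun t ht hK => mem_U.1 ht (.base hK), ⟨s, mem_U.2 hs⟩, fun c ⟨t, ht⟩ => ?_⟩
  rw [Finset.mem_inter, mem_U] at ht
  by_contra hlt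
  have hsub : ∀ u ∈ adj c ∩ U, u = t := fun u hu =>
    by_contra fun hne =>
      hlt (Finset.one_lt_card.2 ⟨u, hu, t, Finset.mem_inter.2 ⟨ht.1, mem_U.2 ht.2⟩, hne⟩)
  refine ht.2 (.peel c ht.1 fun u hu hne => ?_)
  by_contra hund
  exact hne (hsub u (Finset.mem_inter.2 ⟨hu, mem_U.2 hund⟩))

end Peeling

theorem collab_decoding_equals_central_general {S C P : Type*} [Fintype S] [DecidableEq S]
    (adj : C → Finset S) (K0 : Set S) (assign : S → Set P) (honest : Set P)
    (hcover : ∀ s : S, ∃ p ∈ assign s, p ∈ honest) :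
    (∀ s : S, CollabDecoded adj K0 assign honest s ↔ CentralDecoded adj K0 s) ∧
    ((¬ ∃ T : Finset S, (∀ s ∈ T, s ∉ K0) ∧ IsStoppingSet adj T) →
      ∀ s : S, CollabDecoded adj K0 assign honest s) := by
  have hiff : ∀ s, CollabDecoded adj K0 assign honest s ↔ CentralDecoded adj K0 s :=
    fun _ => ⟨CollabDecoded.centralDecoded, CentralDecoded.collabDecoded hcover⟩
  refine ⟨hiff, fun hnone s => (hiff s).2 ?_⟩
  by_contra hs
  exact hnone (exists_stoppingSet_of_not_centralDecoded hs)

/-- If every symbol is covered by at least one honest participant (and every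
broadcast reaches everyone, as modeled by the shared decoded sets), then
collaborative peeling decodes exactly the same symbols as centralized
peeling; in particular, if no stopping set is hidden, collaborative decoding
recovers all symbols. -/
theorem collab_decoding_equals_central {S C P : Type*} [Fintype S] [Fintype C] [DecidableEq S]
    (adj : C → Finset S) (K0 : Set S) (assign : S → Set P) (honest : Set P)
    (hcover : ∀ s : S, ∃ p ∈ assign s, p ∈ honest) :
    (∀ s : S, CollabDecoded adj K0 assign honest s ↔ CentralDecoded adj K0 s) ∧
    ((¬ ∃ T : Finset S, (∀ s ∈ T, s ∉ K0) ∧ IsStoppingSet adj T) →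
      ∀ s : S, CollabDecoded adj K0 assign honest s) :=
  collab_decoding_equals_central_general adj K0 assign honest hcover
end

section
/- Conversely, if the set of erased symbols contains a nonempty stopping set, then peeling decoding fails: the symbols in a maximal stopping set contained in the erased set are never recovered. -/
/-- Peeling decoding: a symbol is decoded if it is initially known (not
erased), or if some parity check containing it has all of its other symbols
decoded. -/
inductive PeelDecoded {S C : Type*} (adj : C → Finset S) (known : Set S) : S → Prop
  | base {s : S} : s ∈ known → PeelDecoded adj known s
  | peel {s : S} (c : C) : s ∈ adj c →
      (∀ t ∈ adj c, t ≠ s → PeelDecoded adj known t) → PeelDecoded adj known s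

/-- Peeling a symbol of `T` off a check `c` would need the other symbols of `c` recovered first,
among them a second symbol of `T`; so no derivation ever reaches `T`. -/
theorem PeelDecoded.notMem_of_forall_exists_ne {S C : Type*} {adj : C → Finset S}
    {known T : Set S} (hknown : Disjoint known T)
    (hT : ∀ c s, s ∈ adj c → s ∈ T → ∃ t ∈ adj c, t ≠ s ∧ t ∈ T)
    {s : S} (hs : PeelDecoded adj known s) : s ∉ T := by
  induction hs with
  | base hknown_s => exact hknown.notMem_of_mem_left hknown_s
  | @peel s c hsc _ ih =>
    intro hsT
    obtain ⟨t, htc, hts, htT⟩ := hT c s hsc hsT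
    exact ih t htc hts htT

theorem IsStoppingSet.exists_mem_ne {S C : Type*} [DecidableEq S] {adj : C → Finset S}
    {T : Finset S} (hT : IsStoppingSet adj T) {c : C} {s : S} (hsc : s ∈ adj c) (hsT : s ∈ T) :
    ∃ t ∈ adj c, t ≠ s ∧ t ∈ T := by
  have htwo := hT.2 c ⟨s, Finset.mem_inter.mpr ⟨hsc, hsT⟩⟩
  obtain ⟨t, ht, hts⟩ := Finset.exists_mem_ne htwo s
  exact ⟨t, (Finset.mem_inter.mp ht).1, hts, (Finset.mem_inter.mp ht).2⟩

/-- If the erased set contains a stopping set `T`, then peeling decoding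
fails: no symbol of `T` is ever recovered, regardless of the order in which
degree-one checks are processed. -/
theorem peeling_fails_of_stopping_set {S C : Type*} [DecidableEq S]
    (adj : C → Finset S) (erased : Finset S) (T : Finset S)
    (hT : T ⊆ erased) (hstop : IsStoppingSet adj T) :
    ∀ s ∈ T, ¬ PeelDecoded adj (fun s => s ∉ erased) s := by
  have hknown : Disjoint (fun s => s ∉ erased : Set S) (T : Set S) :=
    Set.disjoint_left.mpr fun _ hs hsT => hs (hT hsT)
  intro s hsT hs
  exact hs.notMem_of_forall_exists_ne hknown (fun _ _ => hstop.exists_mem_ne) hsT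
end
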